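/- arXiv:1605.03564 — 4 statements merged into one kernel-verified Lean document; each statement's English description precedes it below -/
import Mathlib

section
/- (Degree criterion.) Let G be a grid-labelled graph of type (a,b) with m ≥ 1 edges. If the density matrix ρ(G) = L(G)/(2m) is separable, then every vertex has the same degree in G as in the partial transpose Γ(G), i.e. for all v ∈ Fin a × Fin b, deg_G(v) = deg_{Γ(G)}(v). -/
open Matrix Kronecker ComplexOrder

/-- The partial transpose of a grid-labelled graph. -/
def PartialTranspose {a b : ℕ} (G : SimpleGraph (Fin a × Fin b)) :
    SimpleGraph (Fin a × Fin b) where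
  Adj v w := G.Adj (w.1, v.2) (v.1, w.2)
  symm := by
    constructor
    intro v w h
    exact G.adj_symm h
  loopless := by
    constructor
    intro v h
    exact G.ne_of_adj h rfl

instance {a b : ℕ} (G : SimpleGraph (Fin a × Fin b)) [h : DecidableRel G.Adj] :
    DecidableRel (PartialTranspose G).Adj :=
  fun v w => h (w.1, v.2) (v.1, w.2)

/-- Separability of a bipartite density matrix. -/
def MatSeparable {a b : ℕ} (ρ : Matrix (Fin a × Fin b) (Fin a × Fin b) ℂ) : Prop :=
  ∃ (n : ℕ) (A : Fin n → Matrix (Fin a) (Fin a) ℂ) (B : Fin n → Matrix (Fin b) (Fin b) ℂ),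
    (∀ i, (A i).PosSemidef) ∧ (∀ i, (B i).PosSemidef) ∧ ρ = ∑ i, (A i) ⊗ₖ (B i)

/-- The density matrix of a grid-labelled graph: `L(G)/(2m)`. -/
noncomputable def densityMatrix {a b : ℕ} (G : SimpleGraph (Fin a × Fin b))
    [DecidableRel G.Adj] : Matrix (Fin a × Fin b) (Fin a × Fin b) ℂ :=
  ((1 : ℂ) / (2 * (G.edgeFinset.card : ℂ))) • G.lapMatrix ℂ

/-- Degree criterion. -/
def DegreeCriterion {a b : ℕ} (G : SimpleGraph (Fin a × Fin b)) [DecidableRel G.Adj] : Prop :=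
  ∀ v, G.degree v = (PartialTranspose G).degree v

lemma kronecker_posSemidef {m n : Type*} [Fintype m] [Fintype n] [DecidableEq m] [DecidableEq n]
    {A : Matrix m m ℂ} {B : Matrix n n ℂ} (hA : A.PosSemidef) (hB : B.PosSemidef) :
    (A ⊗ₖ B).PosSemidef := by
  exact hA.kronecker hB

lemma pt_mulVec_one {a b : ℕ} (G : SimpleGraph (Fin a × Fin b)) [DecidableRel G.Adj]
    (v : Fin a × Fin b) :
    ∑ w : Fin a × Fin b, G.lapMatrix ℂ (w.1, v.2) (v.1, w.2)
      = (G.degree v : ℂ) - ((PartialTranspose G).degree v : ℂ) := by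
  have h1 : ∑ w : Fin a × Fin b, (G.degMatrix ℂ) (w.1, v.2) (v.1, w.2) = (G.degree v : ℂ) := by
    have : ∀ w : Fin a × Fin b, (G.degMatrix ℂ) (w.1, v.2) (v.1, w.2)
        = if w = v then (G.degree (w.1, v.2) : ℂ) else 0 := by
      intro w
      rw [SimpleGraph.degMatrix, Matrix.diagonal_apply]
      congr 1
      simp only [Prod.ext_iff, eq_iff_iff]
      constructor
      · rintro ⟨h1, h2⟩; exact ⟨h1, h2.symm⟩
      · rintro ⟨h1, h2⟩; exact ⟨h1, h2.symm⟩
    simp only [this]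
    rw [Finset.sum_ite_eq' Finset.univ v]
    simp
  have h2 : ∑ w : Fin a × Fin b, (G.adjMatrix ℂ) (w.1, v.2) (v.1, w.2)
      = ((PartialTranspose G).degree v : ℂ) := by
    have : ∀ w : Fin a × Fin b, (G.adjMatrix ℂ) (w.1, v.2) (v.1, w.2)
        = ((PartialTranspose G).adjMatrix ℂ) v w := by
      intro w
      simp only [SimpleGraph.adjMatrix_apply]
      rfl
    simp only [this]
    have := SimpleGraph.adjMatrix_mulVec_const_apply (α := ℂ) (G := PartialTranspose G)
      (a := (1 : ℂ)) (v := v)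
    simpa [Matrix.mulVec, dotProduct] using this
  simp only [SimpleGraph.lapMatrix, Matrix.sub_apply, Finset.sum_sub_distrib, h1, h2]

set_option maxHeartbeats 1000000 in
theorem statement1 {a b : ℕ} (G : SimpleGraph (Fin a × Fin b)) [DecidableRel G.Adj]
    (hm : 1 ≤ G.edgeFinset.card)
    (hsep : MatSeparable (densityMatrix G)) :
    ∀ v, G.degree v = (PartialTranspose G).degree v := by
  classical
  set c : ℂ := 2 * (G.edgeFinset.card : ℂ) with hc_def
  have hc : c ≠ 0 := by
    have h1 : (G.edgeFinset.card : ℂ) ≠ 0 := by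
      exact_mod_cast Nat.one_le_iff_ne_zero.mp hm
    exact mul_ne_zero two_ne_zero h1
  set M : Matrix (Fin a × Fin b) (Fin a × Fin b) ℂ :=
    Matrix.of (fun v w => densityMatrix G (w.1, v.2) (v.1, w.2)) with hM_def
  have hMpsd : M.PosSemidef := by
    obtain ⟨n, A, B, hA, hB, hρ⟩ := hsep
    have hM : M = ∑ i, (A i)ᵀ ⊗ₖ (B i) := by
      ext ⟨v1, v2⟩ ⟨w1, w2⟩
      show densityMatrix G (w1, v2) (v1, w2) = _
      rw [hρ]
      simp only [Matrix.sum_apply, Matrix.kroneckerMap_apply, Matrix.transpose_apply]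
    rw [hM]
    apply Finset.sum_induction _ (fun X : Matrix (Fin a × Fin b) (Fin a × Fin b) ℂ => X.PosSemidef)
      (fun x y hx hy => hx.add hy) Matrix.PosSemidef.zero
    intro i _
    exact kronecker_posSemidef (hA i).transpose (hB i)
  have hentry : ∀ v, (M *ᵥ fun _ => (1 : ℂ)) v
      = (1 / c) * ((G.degree v : ℂ) - ((PartialTranspose G).degree v : ℂ)) := by
    intro v
    have : (M *ᵥ fun _ => (1 : ℂ)) v
        = (1 / c) * ∑ w : Fin a × Fin b, G.lapMatrix ℂ (w.1, v.2) (v.1, w.2) := by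
      simp only [hM_def, Matrix.mulVec, dotProduct, Matrix.of_apply, densityMatrix,
        Matrix.smul_apply, smul_eq_mul, mul_one, hc_def, Finset.mul_sum]
    rw [this, pt_mulVec_one]
  -- the quadratic form at the all-ones vector vanishes
  have hdegsum : ∑ v : Fin a × Fin b, ((PartialTranspose G).degree v : ℂ)
      = ∑ v : Fin a × Fin b, (G.degree v : ℂ) := by
    have hdeg : ∀ (H : SimpleGraph (Fin a × Fin b)) (_ : DecidableRel H.Adj) (v),
        (H.degree v : ℂ) = ∑ w : Fin a × Fin b, if H.Adj v w then (1:ℂ) else 0 := by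
      intro H _ v
      have := SimpleGraph.adjMatrix_mulVec_const_apply (α := ℂ) (G := H) (a := (1 : ℂ)) (v := v)
      simpa [Matrix.mulVec, dotProduct] using this.symm
    rw [Finset.sum_congr rfl fun v _ => hdeg _ _ v, Finset.sum_congr rfl fun v _ => hdeg _ _ v]
    rw [← Finset.sum_product', ← Finset.sum_product']
    let σ : (Fin a × Fin b) × (Fin a × Fin b) → (Fin a × Fin b) × (Fin a × Fin b) :=
      fun p => ((p.2.1, p.1.2), (p.1.1, p.2.2))
    have hσ : Function.Involutive σ := fun p => rfl
    exact Finset.sum_bijective σ hσ.bijective (fun i => by simp) (fun i _ => rfl)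
  have hquad : star (fun _ => (1:ℂ)) ⬝ᵥ M *ᵥ (fun _ => (1:ℂ)) = 0 := by
    have : star (fun _ => (1:ℂ)) ⬝ᵥ M *ᵥ (fun _ => (1:ℂ))
        = ∑ v : Fin a × Fin b, (M *ᵥ fun _ => (1 : ℂ)) v := by
      simp [dotProduct]
    rw [this, Finset.sum_congr rfl fun v _ => hentry v, ← Finset.mul_sum,
      Finset.sum_sub_distrib, hdegsum]
    simp
  have hker := (hMpsd.dotProduct_mulVec_zero_iff _).mp hquad
  intro v
  have h0 : (1 / c) * ((G.degree v : ℂ) - ((PartialTranspose G).degree v : ℂ)) = 0 := by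
    rw [← hentry v, hker]
    rfl
  have := (mul_eq_zero.mp h0).resolve_left (by simp [hc])
  have : (G.degree v : ℂ) = ((PartialTranspose G).degree v : ℂ) := by linear_combination this
  exact_mod_cast this
end

section
/- For all a,b ≥ 2, the number of simple graphs on the vertex set Fin a × Fin b with exactly 2 edges, both diagonal, that satisfy the degree criterion equals C(a,2)·C(b,2), where C denotes the binomial coefficient. -/
open Matrix

/-- The degree criterion, phrased via `Set.ncard` of neighbour sets so that no
decidability assumptions are needed. -/
def DegCrit {a b : ℕ} (G : SimpleGraph (Fin a × Fin b)) : Prop :=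
  ∀ v, (G.neighborSet v).ncard = ((PartialTranspose G).neighborSet v).ncard

/-- `Pnum a b k`: the number of simple graphs on `Fin a × Fin b` with exactly `k`
edges that satisfy the degree criterion. -/
noncomputable def Pnum (a b k : ℕ) : ℕ :=
  Nat.card {G : SimpleGraph (Fin a × Fin b) // G.edgeSet.ncard = k ∧ DegCrit G}

/-- `Dnum a b k`: the number of simple graphs on `Fin a × Fin b` with exactly `k`
edges, all diagonal, that satisfy the degree criterion. -/
noncomputable def Dnum (a b k : ℕ) : ℕ :=
  Nat.card {G : SimpleGraph (Fin a × Fin b) //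
    G.edgeSet.ncard = k ∧ (∀ v w : Fin a × Fin b, G.Adj v w → v.1 ≠ w.1 ∧ v.2 ≠ w.2) ∧
      DegCrit G}

section Aux

variable {a b : ℕ}

/-- The "cross" graph on rows `i,k` and columns `j,l`. -/
def Cross (i k : Fin a) (j l : Fin b) : SimpleGraph (Fin a × Fin b) :=
  SimpleGraph.fromEdgeSet {s((i,j),(k,l)), s((k,j),(i,l))}

lemma cross_ne {i k : Fin a} {j l : Fin b} (hik : i ≠ k) (hjl : j ≠ l) :
    (s((i,j),(k,l)) : Sym2 (Fin a × Fin b)) ≠ s((k,j),(i,l)) := by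
  simp [Sym2.eq_iff, Prod.ext_iff]
  tauto

lemma cross_edgeSet {i k : Fin a} {j l : Fin b} (hik : i ≠ k) (hjl : j ≠ l) :
    (Cross i k j l).edgeSet = {s((i,j),(k,l)), s((k,j),(i,l))} := by
  rw [Cross, SimpleGraph.edgeSet_fromEdgeSet]
  ext e
  simp only [Set.mem_diff, Set.mem_insert_iff, Set.mem_singleton_iff, Set.mem_setOf_eq]
  constructor
  · exact fun h => h.1
  · rintro (rfl | rfl) <;>
    · refine ⟨by tauto, ?_⟩
      simp [Sym2.mk_isDiag_iff, Prod.ext_iff]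
      tauto

lemma cross_ncard {i k : Fin a} {j l : Fin b} (hik : i ≠ k) (hjl : j ≠ l) :
    (Cross i k j l).edgeSet.ncard = 2 := by
  rw [cross_edgeSet hik hjl, Set.ncard_pair (cross_ne hik hjl)]

lemma cross_adj {i k : Fin a} {j l : Fin b} (hik : i ≠ k) (hjl : j ≠ l)
    (v1 w1 : Fin a) (v2 w2 : Fin b) :
    (Cross i k j l).Adj (v1, v2) (w1, w2) ↔
      ((v1 = i ∧ v2 = j ∧ w1 = k ∧ w2 = l) ∨ (v1 = k ∧ v2 = l ∧ w1 = i ∧ w2 = j) ∨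
       (v1 = k ∧ v2 = j ∧ w1 = i ∧ w2 = l) ∨ (v1 = i ∧ v2 = l ∧ w1 = k ∧ w2 = j)) := by
  simp only [Cross, SimpleGraph.fromEdgeSet_adj, Set.mem_insert_iff, Set.mem_singleton_iff,
    Sym2.eq_iff, Prod.mk.injEq, ne_eq, Prod.ext_iff, not_and]
  constructor
  · rintro ⟨h, -⟩
    tauto
  · intro h
    refine ⟨by tauto, ?_⟩
    rcases h with ⟨rfl, rfl, rfl, rfl⟩ | ⟨rfl, rfl, rfl, rfl⟩ | ⟨rfl, rfl, rfl, rfl⟩ |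
      ⟨rfl, rfl, rfl, rfl⟩ <;>
      first
        | exact fun h _ => hik h
        | exact fun h _ => hik h.symm

lemma cross_diag {i k : Fin a} {j l : Fin b} (hik : i ≠ k) (hjl : j ≠ l) :
    ∀ v w : Fin a × Fin b, (Cross i k j l).Adj v w → v.1 ≠ w.1 ∧ v.2 ≠ w.2 := by
  rintro ⟨v1, v2⟩ ⟨w1, w2⟩ h
  rw [cross_adj hik hjl] at h
  rcases h with ⟨rfl, rfl, rfl, rfl⟩ | ⟨rfl, rfl, rfl, rfl⟩ | ⟨rfl, rfl, rfl, rfl⟩ |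
    ⟨rfl, rfl, rfl, rfl⟩ <;>
    first
      | exact ⟨hik, hjl⟩
      | exact ⟨hik.symm, hjl.symm⟩
      | exact ⟨hik.symm, hjl⟩
      | exact ⟨hik, hjl.symm⟩

lemma cross_pt {i k : Fin a} {j l : Fin b} (hik : i ≠ k) (hjl : j ≠ l) :
    PartialTranspose (Cross i k j l) = Cross i k j l := by
  ext ⟨v1, v2⟩ ⟨w1, w2⟩
  show (Cross i k j l).Adj (w1, v2) (v1, w2) ↔ (Cross i k j l).Adj (v1, v2) (w1, w2)
  rw [cross_adj hik hjl, cross_adj hik hjl]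
  tauto

lemma cross_degCrit {i k : Fin a} {j l : Fin b} (hik : i ≠ k) (hjl : j ≠ l) :
    DegCrit (Cross i k j l) := by
  intro v
  rw [cross_pt hik hjl]

lemma cross_comm_rows (i k : Fin a) (j l : Fin b) : Cross i k j l = Cross k i j l := by
  rw [Cross, Cross, Set.pair_comm]

lemma cross_comm_cols (i k : Fin a) (j l : Fin b) : Cross i k j l = Cross i k l j := by
  rw [Cross, Cross, Set.pair_comm,
    show (s((i,l),(k,j)) : Sym2 (Fin a × Fin b)) = s((k,j),(i,l)) from Sym2.eq_swap,
    show (s((k,l),(i,j)) : Sym2 (Fin a × Fin b)) = s((i,j),(k,l)) from Sym2.eq_swap]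

lemma eq_pair_min_max {α : Type*} [LinearOrder α] [DecidableEq α] (s : Finset α) (hs : s.card = 2)
    (h : s.Nonempty) : s = {s.min' h, s.max' h} := by
  have hlt : s.min' h < s.max' h := Finset.min'_lt_max'_of_card _ (by omega)
  refine (Finset.eq_of_subset_of_card_le ?_ ?_).symm
  · intro x hx
    rcases Finset.mem_insert.mp hx with rfl | hx
    · exact s.min'_mem h
    · rw [Finset.mem_singleton.mp hx]; exact s.max'_mem h
  · rw [hs, Finset.card_insert_of_notMem (by simp [hlt.ne]), Finset.card_singleton]

lemma pair_minmax {α : Type*} [LinearOrder α] [DecidableEq α] {x y : α} (hxy : x ≠ y) (h : ({x, y} : Finset α).Nonempty) :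
    (({x, y} : Finset α).min' h = x ∧ ({x, y} : Finset α).max' h = y) ∨
    (({x, y} : Finset α).min' h = y ∧ ({x, y} : Finset α).max' h = x) := by
  have hne : ({x, y} : Finset α).min' h ≠ ({x, y} : Finset α).max' h :=
    (Finset.min'_lt_max'_of_card _ (by rw [Finset.card_pair hxy]; omega)).ne
  have hm := Finset.min'_mem ({x, y} : Finset α) h
  have hM := Finset.max'_mem ({x, y} : Finset α) h
  simp only [Finset.mem_insert, Finset.mem_singleton] at hm hM
  rcases hm with hm | hm <;> rcases hM with hM | hM
  · exact absurd (hm.trans hM.symm) hne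
  · exact Or.inl ⟨hm, hM⟩
  · exact Or.inr ⟨hm, hM⟩
  · exact absurd (hm.trans hM.symm) hne

lemma cross_inj {a b : ℕ} {i k i' k' : Fin a} {j l j' l' : Fin b}
    (h1 : i < k) (h2 : j < l) (h3 : i' < k') (h4 : j' < l')
    (h : Cross i k j l = Cross i' k' j' l') : i = i' ∧ k = k' ∧ j = j' ∧ l = l' := by
  have hE := congrArg SimpleGraph.edgeSet h
  rw [cross_edgeSet h1.ne h2.ne, cross_edgeSet h3.ne h4.ne] at hE
  have h5 : (s((i,j),(k,l)) : Sym2 (Fin a × Fin b)) ∈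
      ({s((i',j'),(k',l')), s((k',j'),(i',l'))} : Set (Sym2 (Fin a × Fin b))) := by
    rw [← hE]; left; rfl
  simp only [Set.mem_insert_iff, Set.mem_singleton_iff, Sym2.eq_iff, Prod.mk.injEq] at h5
  rcases h5 with (⟨⟨hii, hjj⟩, hkk, hll⟩ | ⟨⟨hik', hjl'⟩, hki, hlj⟩) |
    (⟨⟨hik', hjj⟩, hki, hll⟩ | ⟨⟨hii, hjl'⟩, hkk, hlj⟩)
  · exact ⟨hii, hkk, hjj, hll⟩
  · rw [← hik', ← hki] at h3
    exact absurd h3 (lt_asymm h1)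
  · rw [← hik', ← hki] at h3
    exact absurd h3 (lt_asymm h1)
  · rw [← hjl', ← hlj] at h4
    exact absurd h4 (lt_asymm h2)

lemma key {a b : ℕ} (G : SimpleGraph (Fin a × Fin b)) (h2 : G.edgeSet.ncard = 2)
    (hd : ∀ v w : Fin a × Fin b, G.Adj v w → v.1 ≠ w.1 ∧ v.2 ≠ w.2) (hc : DegCrit G) :
    ∃ (i k : Fin a) (j l : Fin b), i ≠ k ∧ j ≠ l ∧ G = Cross i k j l := by
  obtain ⟨e1, e2, hne, hE⟩ := Set.ncard_eq_two.mp h2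
  revert hne hE
  induction e1 using Sym2.ind with
  | _ u1 u2 =>
  induction e2 using Sym2.ind with
  | _ u3 u4 =>
  obtain ⟨i, j⟩ := u1; obtain ⟨k, l⟩ := u2
  obtain ⟨p1, p2⟩ := u3; obtain ⟨p3, p4⟩ := u4
  intro hne hE
  have hm1 : G.Adj (i, j) (k, l) := G.mem_edgeSet.mp (by rw [hE]; left; rfl)
  obtain ⟨hik, hjl⟩ := hd _ _ hm1
  have nb : ∀ (x : Fin a) (y : Fin b) (z : Fin a × Fin b), G.Adj (x, y) z →
      ∃ w1 w2, G.Adj (w1, y) (x, w2) := by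
    intro x y z hz
    have h1 : 0 < ((PartialTranspose G).neighborSet (x, y)).ncard := by
      rw [← hc (x, y)]
      exact (Set.ncard_pos (Set.toFinite _)).mpr ⟨z, hz⟩
    obtain ⟨⟨w1, w2⟩, hw⟩ := Set.nonempty_of_ncard_ne_zero h1.ne'
    exact ⟨w1, w2, hw⟩
  -- constraint from vertex (i, j)
  obtain ⟨w1, w2, hw⟩ := nb i j _ hm1
  have hwE : (s((w1, j), (i, w2)) : Sym2 (Fin a × Fin b)) ∈
      ({s((i,j),(k,l)), s((p1,p2),(p3,p4))} : Set (Sym2 (Fin a × Fin b))) := by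
    rw [← hE]; exact G.mem_edgeSet.mpr hw
  simp only [Set.mem_insert_iff, Set.mem_singleton_iff, Sym2.eq_iff, Prod.mk.injEq] at hwE
  have A : (p2 = j ∧ p3 = i) ∨ (p4 = j ∧ p1 = i) := by
    rcases hwE with (⟨⟨-, -⟩, hik', -⟩ | ⟨⟨-, hjl'⟩, -, -⟩) |
      (⟨⟨-, hj⟩, hi, -⟩ | ⟨⟨-, hj⟩, hi, -⟩)
    · exact absurd hik' hik
    · exact absurd hjl' hjl
    · exact Or.inl ⟨hj.symm, hi.symm⟩
    · exact Or.inr ⟨hj.symm, hi.symm⟩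
  -- constraint from vertex (k, l)
  obtain ⟨x1, x2, hx⟩ := nb k l _ hm1.symm
  have hxE : (s((x1, l), (k, x2)) : Sym2 (Fin a × Fin b)) ∈
      ({s((i,j),(k,l)), s((p1,p2),(p3,p4))} : Set (Sym2 (Fin a × Fin b))) := by
    rw [← hE]; exact G.mem_edgeSet.mpr hx
  simp only [Set.mem_insert_iff, Set.mem_singleton_iff, Sym2.eq_iff, Prod.mk.injEq] at hxE
  have B : (p2 = l ∧ p3 = k) ∨ (p4 = l ∧ p1 = k) := by
    rcases hxE with (⟨⟨-, hlj⟩, -, -⟩ | ⟨⟨-, -⟩, hki, -⟩) |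
      (⟨⟨-, hj⟩, hi, -⟩ | ⟨⟨-, hj⟩, hi, -⟩)
    · exact absurd hlj.symm hjl
    · exact absurd hki.symm hik
    · exact Or.inl ⟨hj.symm, hi.symm⟩
    · exact Or.inr ⟨hj.symm, hi.symm⟩
  refine ⟨i, k, j, l, hik, hjl, ?_⟩
  rcases A with ⟨hA1, hA2⟩ | ⟨hA1, hA2⟩
  · rcases B with ⟨hB1, hB2⟩ | ⟨hB1, hB2⟩
    · exact absurd (hA1.symm.trans hB1) hjl
    · have he2 : (s((p1, p2), (p3, p4)) : Sym2 (Fin a × Fin b)) = s((k, j), (i, l)) := by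
        rw [hA1, hA2, hB1, hB2]
      rw [← SimpleGraph.fromEdgeSet_edgeSet G, hE, he2]
      rfl
  · rcases B with ⟨hB1, hB2⟩ | ⟨hB1, hB2⟩
    · have he2 : (s((p1, p2), (p3, p4)) : Sym2 (Fin a × Fin b)) = s((k, j), (i, l)) := by
        rw [hA1, hA2, hB1, hB2]
        exact Sym2.eq_swap
      rw [← SimpleGraph.fromEdgeSet_edgeSet G, hE, he2]
      rfl
    · exact absurd (hA1.symm.trans hB1) hjl

/-- The map from pairs of 2-element sets of rows/columns to cross graphs. -/
def toSub {a b : ℕ} (p : {p : Finset (Fin a) × Finset (Fin b) // p.1.card = 2 ∧ p.2.card = 2}) :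
    {G : SimpleGraph (Fin a × Fin b) //
      G.edgeSet.ncard = 2 ∧ (∀ v w : Fin a × Fin b, G.Adj v w → v.1 ≠ w.1 ∧ v.2 ≠ w.2) ∧
        DegCrit G} :=
  have h1 : p.1.1.Nonempty := Finset.card_pos.mp (by rw [p.2.1]; omega)
  have h2 : p.1.2.Nonempty := Finset.card_pos.mp (by rw [p.2.2]; omega)
  have hik : p.1.1.min' h1 ≠ p.1.1.max' h1 :=
    ne_of_lt (Finset.min'_lt_max'_of_card _ (by rw [p.2.1]; omega))
  have hjl : p.1.2.min' h2 ≠ p.1.2.max' h2 :=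
    ne_of_lt (Finset.min'_lt_max'_of_card _ (by rw [p.2.2]; omega))
  ⟨Cross (p.1.1.min' h1) (p.1.1.max' h1) (p.1.2.min' h2) (p.1.2.max' h2),
    cross_ncard hik hjl, cross_diag hik hjl, cross_degCrit hik hjl⟩

lemma toSub_bijective {a b : ℕ} : Function.Bijective (toSub (a := a) (b := b)) := by
  constructor
  · rintro ⟨⟨s1, t1⟩, hs1, ht1⟩ ⟨⟨s2, t2⟩, hs2, ht2⟩ h
    have h1 : s1.Nonempty := Finset.card_pos.mp (by rw [hs1]; omega)
    have h2 : t1.Nonempty := Finset.card_pos.mp (by rw [ht1]; omega)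
    have h3 : s2.Nonempty := Finset.card_pos.mp (by rw [hs2]; omega)
    have h4 : t2.Nonempty := Finset.card_pos.mp (by rw [ht2]; omega)
    have hg : Cross (s1.min' h1) (s1.max' h1) (t1.min' h2) (t1.max' h2)
        = Cross (s2.min' h3) (s2.max' h3) (t2.min' h4) (t2.max' h4) :=
      congrArg Subtype.val h
    obtain ⟨e1, e2, e3, e4⟩ := cross_inj
      (Finset.min'_lt_max'_of_card _ (by rw [hs1]; omega))
      (Finset.min'_lt_max'_of_card _ (by rw [ht1]; omega))
      (Finset.min'_lt_max'_of_card _ (by rw [hs2]; omega))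
      (Finset.min'_lt_max'_of_card _ (by rw [ht2]; omega)) hg
    apply Subtype.ext
    show (s1, t1) = (s2, t2)
    rw [eq_pair_min_max s1 hs1 h1, eq_pair_min_max t1 ht1 h2,
      eq_pair_min_max s2 hs2 h3, eq_pair_min_max t2 ht2 h4, e1, e2, e3, e4]
  · rintro ⟨G, hG2, hGd, hGc⟩
    obtain ⟨i, k, j, l, hik, hjl, rfl⟩ := key G hG2 hGd hGc
    have hr : ({i, k} : Finset (Fin a)).Nonempty := ⟨i, by simp⟩
    have hcn : ({j, l} : Finset (Fin b)).Nonempty := ⟨j, by simp⟩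
    refine ⟨⟨({i, k}, {j, l}), Finset.card_pair hik, Finset.card_pair hjl⟩, ?_⟩
    apply Subtype.ext
    show Cross (({i, k} : Finset (Fin a)).min' _) (({i, k} : Finset (Fin a)).max' _)
      (({j, l} : Finset (Fin b)).min' _) (({j, l} : Finset (Fin b)).max' _) = Cross i k j l
    rcases pair_minmax hik hr with ⟨e1, e2⟩ | ⟨e1, e2⟩ <;>
      rcases pair_minmax hjl hcn with ⟨e3, e4⟩ | ⟨e3, e4⟩ <;> rw [e1, e2, e3, e4] <;>
      first
        | rfl
        | exact (cross_comm_cols i k j l).symm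
        | exact (cross_comm_rows i k j l).symm
        | exact ((cross_comm_rows i k j l).trans (cross_comm_cols k i j l)).symm

end Aux

theorem statement16 (a b : ℕ) (ha : 2 ≤ a) (hb : 2 ≤ b) :
    Dnum a b 2 = Nat.choose a 2 * Nat.choose b 2 := by
  classical
  have hT : Nat.card {p : Finset (Fin a) × Finset (Fin b) // p.1.card = 2 ∧ p.2.card = 2}
      = Nat.choose a 2 * Nat.choose b 2 := by
    rw [Nat.card_eq_fintype_card, Fintype.card_congr
        (Equiv.subtypeProdEquivProd (p := fun s : Finset (Fin a) => s.card = 2)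
          (q := fun t : Finset (Fin b) => t.card = 2)),
      Fintype.card_prod]
    simp [Fintype.card_finset_len]
  rw [Dnum, ← hT]
  exact (Nat.card_eq_of_bijective toSub toSub_bijective).symm
end

section
/- Let G be a grid-labelled graph of type (a,b) all of whose edges are diagonal, with Laplacian L = D − A over ℝ (D the degree matrix, A the adjacency matrix). Then R(L)·R(L)ᵀ = R(D)·R(D)ᵀ + R(A)·R(A)ᵀ, where R denotes the realignment map. -/
open Matrix

/-- The realignment of a real matrix indexed by `(Fin a × Fin b) × (Fin a × Fin b)`. -/
def realign {a b : ℕ} (M : Matrix (Fin a × Fin b) (Fin a × Fin b) ℝ) :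
    Matrix (Fin a × Fin a) (Fin b × Fin b) ℝ :=
  Matrix.of fun p q => M (p.1, q.1) (p.2, q.2)

lemma realign_sub {a b : ℕ} (M N : Matrix (Fin a × Fin b) (Fin a × Fin b) ℝ) :
    realign (M - N) = realign M - realign N := rfl

lemma cross_zero {a b : ℕ} (G : SimpleGraph (Fin a × Fin b)) [DecidableRel G.Adj]
    (hdiag : ∀ v w : Fin a × Fin b, G.Adj v w → v.1 ≠ w.1 ∧ v.2 ≠ w.2) :
    realign (G.degMatrix ℝ) * (realign (G.adjMatrix ℝ))ᵀ = 0 := by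
  ext ⟨i, k⟩ ⟨j, l⟩
  simp only [mul_apply, transpose_apply, realign, of_apply, Matrix.zero_apply]
  refine Finset.sum_eq_zero fun x _ => ?_
  rcases x with ⟨j', l'⟩
  simp only [SimpleGraph.degMatrix, SimpleGraph.adjMatrix, of_apply]
  by_cases h : ((i, j') : Fin a × Fin b) = (k, l')
  · have h2 : ¬ G.Adj (j, j') (l, l') := by
      intro hadj
      have := (hdiag _ _ hadj).2
      simp only [Prod.mk.injEq] at h
      exact this (by simp [h.2])
    simp [h, h2]
  · simp [h]

theorem statement18 {a b : ℕ} (G : SimpleGraph (Fin a × Fin b)) [DecidableRel G.Adj]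
    (hdiag : ∀ v w : Fin a × Fin b, G.Adj v w → v.1 ≠ w.1 ∧ v.2 ≠ w.2) :
    realign (G.lapMatrix ℝ) * (realign (G.lapMatrix ℝ))ᵀ =
      realign (G.degMatrix ℝ) * (realign (G.degMatrix ℝ))ᵀ +
        realign (G.adjMatrix ℝ) * (realign (G.adjMatrix ℝ))ᵀ := by
  have h1 := cross_zero G hdiag
  have h2 : realign (G.adjMatrix ℝ) * (realign (G.degMatrix ℝ))ᵀ = 0 := by
    have h3 := congrArg Matrix.transpose h1
    rw [Matrix.transpose_mul, Matrix.transpose_transpose, Matrix.transpose_zero] at h3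
    exact h3
  have hlap : G.lapMatrix ℝ = G.degMatrix ℝ - G.adjMatrix ℝ := rfl
  rw [hlap, realign_sub, Matrix.transpose_sub, Matrix.sub_mul, Matrix.mul_sub,
    Matrix.mul_sub, h1, h2]
  abel
end

section
/- Let b ≥ 2 and let G be a grid-labelled graph of type (2,b) with e ≥ 4 edges such that: every edge of G is diagonal; every edge is a singleton (every vertex of G has degree at most 1); and G is row orthogonal (for every column j ∈ Fin b, deg((0,j)) = 0 or deg((1,j)) = 0). Let ρ = L(G)/(2e) be its density matrix over ℝ, let M = R(ρ) be the realigned matrix, and let h be a proof that the real symmetric matrix M·Mᵀ is Hermitian. Then the Ky Fan norm of M, namely ∑_x Real.sqrt (h.eigenvalues x) (the sum of the singular values of M), is at most 1. -/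
open Matrix

/-- The trace of a real hermitian matrix is the sum of its eigenvalues. -/
lemma trace_eq_sum_eigenvalues_real {n : Type*} [Fintype n] [DecidableEq n]
    {A : Matrix n n ℝ} (hA : A.IsHermitian) :
    A.trace = ∑ i, hA.eigenvalues i := by
  rw [hA.trace_eq_sum_eigenvalues]
  simp

theorem statement19 {b : ℕ} (hb : 2 ≤ b)
    (G : SimpleGraph (Fin 2 × Fin b)) [DecidableRel G.Adj]
    (he : 4 ≤ G.edgeFinset.card)
    (hdiag : ∀ v w : Fin 2 × Fin b, G.Adj v w → v.1 ≠ w.1 ∧ v.2 ≠ w.2)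
    (hsingleton : ∀ v, G.degree v ≤ 1)
    (horth : ∀ j : Fin b, G.degree (0, j) = 0 ∨ G.degree (1, j) = 0)
    (M : Matrix (Fin 2 × Fin 2) (Fin b × Fin b) ℝ)
    (hM : M = realign (((1 : ℝ) / (2 * (G.edgeFinset.card : ℝ))) • G.lapMatrix ℝ))
    (h : (M * Mᵀ).IsHermitian) :
    ∑ x, Real.sqrt (h.eigenvalues x) ≤ 1 := by
  classical
  set e : ℝ := (G.edgeFinset.card : ℝ) with hedef
  have he' : (4 : ℝ) ≤ e := by rw [hedef]; exact_mod_cast he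
  have hepos : (0 : ℝ) < e := by linarith
  set c : ℝ := (1 : ℝ) / (2 * e) with hcdef
  set L : Matrix (Fin 2 × Fin b) (Fin 2 × Fin b) ℝ := G.lapMatrix ℝ with hLdef
  -- entry formula for L
  have hLentry : ∀ v w : Fin 2 × Fin b,
      L v w = (if v = w then (G.degree v : ℝ) else 0) - (if G.Adj v w then 1 else 0) := by
    intro v w
    simp [hLdef, SimpleGraph.lapMatrix, SimpleGraph.degMatrix, Matrix.sub_apply,
      Matrix.diagonal_apply, SimpleGraph.adjMatrix_apply]
  -- the square of each entry
  have hLsq : ∀ v w : Fin 2 × Fin b,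
      (L v w) ^ 2 = (if v = w then (G.degree v : ℝ) ^ 2 else 0)
        + (if G.Adj v w then 1 else 0) := by
    intro v w
    rw [hLentry v w]
    by_cases hvw : v = w
    · subst hvw
      simp [G.irrefl]
    · simp only [hvw, if_false]
      by_cases hadj : G.Adj v w <;> simp [hadj]
  -- row sums of squares
  have hrow : ∀ v : Fin 2 × Fin b, ∑ w, (L v w) ^ 2 = 2 * (G.degree v : ℝ) := by
    intro v
    have hdeg : (G.degree v : ℝ) ^ 2 = (G.degree v : ℝ) := by
      have := hsingleton v
      interval_cases h : G.degree v <;> norm_num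
    calc ∑ w, (L v w) ^ 2
        = ∑ w, ((if v = w then (G.degree v : ℝ) ^ 2 else 0)
            + (if G.Adj v w then 1 else 0)) := by
          exact Finset.sum_congr rfl fun w _ => hLsq v w
      _ = (G.degree v : ℝ) ^ 2 + ∑ w, (if G.Adj v w then (1:ℝ) else 0) := by
          rw [Finset.sum_add_distrib, Finset.sum_ite_eq (Finset.univ) v
            (fun _ => (G.degree v : ℝ) ^ 2)]
          simp
      _ = (G.degree v : ℝ) + (G.degree v : ℝ) := by
          rw [hdeg, ← SimpleGraph.degree_eq_sum_if_adj]
      _ = 2 * (G.degree v : ℝ) := by ring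
  -- Frobenius norm of L
  have hfrob : ∑ v : Fin 2 × Fin b, ∑ w : Fin 2 × Fin b, (L v w) ^ 2 = 4 * e := by
    have hhs : ∑ v, (G.degree v : ℝ) = 2 * e := by
      rw [hedef]
      rw [← Nat.cast_sum]
      rw [G.sum_degrees_eq_twice_card_edges]
      push_cast
      ring
    calc ∑ v : Fin 2 × Fin b, ∑ w : Fin 2 × Fin b, (L v w) ^ 2
        = ∑ v : Fin 2 × Fin b, 2 * (G.degree v : ℝ) :=
          Finset.sum_congr rfl fun v _ => hrow v
      _ = 2 * ∑ v, (G.degree v : ℝ) := by rw [Finset.mul_sum]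
      _ = 4 * e := by rw [hhs]; ring
  -- entries of M
  have hMentry : ∀ (i k : Fin 2) (j l : Fin b),
      M (i, k) (j, l) = c * L (i, j) (k, l) := by
    intro i k j l
    rw [hM]
    simp [realign, hcdef, hLdef]
  -- the trace of M * Mᵀ
  have htrace : (M * Mᵀ).trace = 1 / e := by
    have h1 : (M * Mᵀ).trace = ∑ p : Fin 2 × Fin 2, ∑ q : Fin b × Fin b, (M p q) ^ 2 := by
      simp only [Matrix.trace, Matrix.diag, Matrix.mul_apply, Matrix.transpose_apply, sq]
    rw [h1]
    have h2 : ∑ p : Fin 2 × Fin 2, ∑ q : Fin b × Fin b, (M p q) ^ 2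
        = ∑ v : Fin 2 × Fin b, ∑ w : Fin 2 × Fin b, (c * L v w) ^ 2 := by
      simp only [Fintype.sum_prod_type]
      refine Finset.sum_congr rfl fun i _ => ?_
      rw [Finset.sum_comm]
      refine Finset.sum_congr rfl fun j _ => Finset.sum_congr rfl fun k _ =>
        Finset.sum_congr rfl fun l _ => ?_
      rw [hMentry i k j l]
    rw [h2]
    have h3 : ∑ v : Fin 2 × Fin b, ∑ w : Fin 2 × Fin b, (c * L v w) ^ 2
        = c ^ 2 * ∑ v : Fin 2 × Fin b, ∑ w : Fin 2 × Fin b, (L v w) ^ 2 := by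
      rw [Finset.mul_sum]
      refine Finset.sum_congr rfl fun v _ => ?_
      rw [Finset.mul_sum]
      refine Finset.sum_congr rfl fun w _ => ?_
      ring
    rw [h3, hfrob, hcdef]
    field_simp
    ring
  -- sum of eigenvalues equals the trace
  have hsum : ∑ x, h.eigenvalues x = 1 / e := by
    rw [← trace_eq_sum_eigenvalues_real h, htrace]
  -- eigenvalues are nonnegative
  have hpsd : (M * Mᵀ).PosSemidef := by
    have : Mᵀ = Mᴴ := (Matrix.conjTranspose_eq_transpose_of_trivial M).symm
    rw [this]
    exact Matrix.posSemidef_self_mul_conjTranspose M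
  have hnonneg : ∀ x, 0 ≤ h.eigenvalues x := fun x => hpsd.eigenvalues_nonneg x
  -- Cauchy–Schwarz
  set S : ℝ := ∑ x, Real.sqrt (h.eigenvalues x) with hSdef
  have hS0 : 0 ≤ S := Finset.sum_nonneg fun x _ => Real.sqrt_nonneg _
  have hCS : S ^ 2 ≤ 4 * (1 / e) := by
    have := sq_sum_le_card_mul_sum_sq (s := (Finset.univ : Finset (Fin 2 × Fin 2)))
      (f := fun x => Real.sqrt (h.eigenvalues x))
    have hcard : ((Finset.univ : Finset (Fin 2 × Fin 2)).card : ℝ) = 4 := by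
      simp
    have hsq : ∑ x, (Real.sqrt (h.eigenvalues x)) ^ 2 = ∑ x, h.eigenvalues x :=
      Finset.sum_congr rfl fun x _ => Real.sq_sqrt (hnonneg x)
    calc S ^ 2 ≤ ((Finset.univ : Finset (Fin 2 × Fin 2)).card : ℝ)
          * ∑ x, (Real.sqrt (h.eigenvalues x)) ^ 2 := this
      _ = 4 * (1 / e) := by rw [hcard, hsq, hsum]
  have h41 : 4 * (1 / e) ≤ 1 := by
    rw [mul_one_div, div_le_one hepos]
    linarith
  nlinarith [hCS, h41, hS0]
end
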